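/- arXiv:1711.04748 — 2 statements merged into one kernel-verified Lean document; each statement's English description precedes it below -/
import Mathlib

section
/- Let ℓ, k, n be positive integers with ℓ ≤ k/2 and (k−ℓ) dividing n. Then every 2-edge-colouring of the complete k-uniform hypergraph K_n^{(k)} contains a blue-red ℓ-path P with |V(P)| = n − k + 2ℓ, i.e. covering all but exactly k − 2ℓ vertices. -/
/-- The `i`-th edge of a `k`-uniform `ℓ`-cycle of length `m` whose cyclic vertex
ordering is given by `v` on indices `0, …, m*(k-ℓ) - 1`: it consists of the `k`
consecutive vertices at positions `i*(k-ℓ), …, i*(k-ℓ)+k-1` (modulo `m*(k-ℓ)`),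
so that consecutive edges intersect in exactly `ℓ` vertices. -/
def cycEdge (k ℓ m : ℕ) {n : ℕ} (v : ℕ → Fin n) (i : ℕ) : Finset (Fin n) :=
  (Finset.range k).image fun j => v ((i * (k - ℓ) + j) % (m * (k - ℓ)))

/-- The last `ℓ` vertices of the `i`-th edge of the `ℓ`-cycle (they are the first
`ℓ` vertices of the `(i+1)`-st edge): positions `i*(k-ℓ)+(k-ℓ), …, i*(k-ℓ)+k-1`
(modulo `m*(k-ℓ)`).  This is the set `e_i⁺`. -/
def cycPlus (k ℓ m : ℕ) {n : ℕ} (v : ℕ → Fin n) (i : ℕ) : Finset (Fin n) :=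
  (Finset.range ℓ).image fun j => v ((i * (k - ℓ) + (k - ℓ) + j) % (m * (k - ℓ)))

/-- The `j`-th edge of a `k`-uniform `ℓ`-path whose linear vertex ordering is
given by `w`: the `k` consecutive vertices at positions `j*(k-ℓ), …, j*(k-ℓ)+k-1`,
so that consecutive edges intersect in exactly `ℓ` vertices. -/
def pathEdge (k ℓ : ℕ) {n : ℕ} (w : ℕ → Fin n) (j : ℕ) : Finset (Fin n) :=
  (Finset.range k).image fun t => w (j * (k - ℓ) + t)

/-- `S ⊆ Fin n` is the vertex set of a monochromatic `k`-uniform `ℓ`-cycle of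
colour `col` with respect to the `2`-edge-colouring `c`.  This is either a
degenerate cycle (a vertex set of size `k-ℓ`, monochromatic in either colour),
a single edge of colour `col`, or a genuine `ℓ`-cycle with `m ≥ 2` edges, given
by a cyclic ordering `v` of its `m*(k-ℓ)` vertices whose edges
`cycEdge k ℓ m v i` (for `i < m`) all have colour `col`.  (For `m = 2` the two
edges intersect in `2ℓ` vertices, as allowed.) -/
def IsMonoCycle (k ℓ : ℕ) {n : ℕ} (c : Finset (Fin n) → Bool) (col : Bool)
    (S : Finset (Fin n)) : Prop :=
  S.card = k - ℓ ∨
  (S.card = k ∧ c S = col) ∨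
  ∃ m : ℕ, 2 ≤ m ∧ ∃ v : ℕ → Fin n,
    Set.InjOn v (Set.Iio (m * (k - ℓ))) ∧
    S = (Finset.range (m * (k - ℓ))).image v ∧
    ∀ i < m, c (cycEdge k ℓ m v i) = col

/-!
Induction on the number `m` of edges, keeping a blue-red `ℓ`-path on `m(k-ℓ)+ℓ` vertices. Let
`m₀` be its turning point, `col` its first colour, `T` the `ℓ` vertices where the edges `m₀ - 1`
and `m₀` meet, and `U` a set of `k-ℓ` fresh vertices. If `T ∪ U` has colour `col`, insert `U`
right after `T`: then `T ∪ U` is a `col`-edge following the `col`-edges. Otherwise insert `U`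
right before `T`: then `U ∪ T` is a `!col`-edge preceding the `!col`-edges. Since `ℓ ≤ k - ℓ`,
every other edge is an old edge, except one next to `T ∪ U` whose colour does not matter. When
`(k-ℓ)(q+1) = n` this reaches `q` edges on `q(k-ℓ)+ℓ = n-k+2ℓ` vertices.
-/

open Finset Function

def IsBlueRed (s : ℕ → Bool) (m m₀ : ℕ) (col : Bool) : Prop :=
  m₀ ≤ m ∧ (∀ j < m₀, s j = col) ∧ ∀ j, m₀ ≤ j → j < m → s j = !col

lemma exists_isBlueRed_of_forall_lt_of_forall_gt {s : ℕ → Bool} {m a : ℕ} {col : Bool}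
    (hlt : ∀ j < a, s j = col) (hgt : ∀ j, a < j → j < m → s j = !col) :
    ∃ m₀, IsBlueRed s m m₀ col := by
  by_cases ha : a < m
  · by_cases hsa : s a = col
    · refine ⟨a + 1, by omega, fun j hj => ?_, fun j hj hjm => hgt j (by omega) hjm⟩
      rcases Nat.lt_succ_iff_lt_or_eq.1 hj with hj | rfl
      exacts [hlt j hj, hsa]
    · refine ⟨a, ha.le, hlt, fun j hj hjm => ?_⟩
      rcases hj.eq_or_lt with rfl | hj
      exacts [Bool.eq_not_iff.2 hsa, hgt j hj hjm]
  · exact ⟨m, le_rfl, fun j hj => hlt j (by omega), fun j hj hjm => by omega⟩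

section InsertBlock

variable {α : Type*}

def insertBlock (w : ℕ → α) {d : ℕ} (u : Fin d → α) (p : ℕ) (i : ℕ) : α :=
  if hp : i < p then w i else if hd : i < p + d then u ⟨i - p, by omega⟩ else w (i - d)

variable (w : ℕ → α) {d : ℕ} (u : Fin d → α) {p : ℕ}

lemma insertBlock_of_lt {i : ℕ} (h : i < p) : insertBlock w u p i = w i := dif_pos h

lemma insertBlock_add_fin (s : Fin d) : insertBlock w u p (p + s) = u s := by
  rw [insertBlock, dif_neg (show ¬p + s < p by omega), dif_pos (show p + s < p + d by omega)]
  congr 1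
  ext
  simp

lemma insertBlock_add {i : ℕ} (h : p ≤ i) : insertBlock w u p (i + d) = w i := by
  rw [insertBlock, dif_neg (show ¬i + d < p by omega), dif_neg (show ¬i + d < p + d by omega),
    Nat.add_sub_cancel]

lemma insertBlock_add_left {a : ℕ} (ha : a ≤ p) (i : ℕ) :
    insertBlock w u p (a + i) = insertBlock (fun i => w (a + i)) u (p - a) i := by
  unfold insertBlock
  split_ifs
  all_goals first
    | omega
    | rfl
    | congr 1; ext; simp only; omega
    | congr 1; omega

lemma image_range_insertBlock [DecidableEq α] {N : ℕ} (hp : p ≤ N) :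
    (range (N + d)).image (insertBlock w u p) = (range N).image w ∪ univ.image u := by
  ext x
  simp only [mem_image, mem_union, mem_range, mem_univ, true_and]
  constructor
  · rintro ⟨i, hi, rfl⟩
    unfold insertBlock
    split_ifs
    · exact Or.inl ⟨i, by omega, rfl⟩
    · exact Or.inr ⟨_, rfl⟩
    · exact Or.inl ⟨i - d, by omega, rfl⟩
  · rintro (⟨i, hi, rfl⟩ | ⟨s, rfl⟩)
    · rcases lt_or_ge i p with h | h
      · exact ⟨i, by omega, insertBlock_of_lt w u h⟩
      · exact ⟨i + d, by omega, insertBlock_add w u h⟩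
    · exact ⟨p + s, by omega, insertBlock_add_fin w u s⟩

lemma injOn_insertBlock [DecidableEq α] {N : ℕ} (hw : Set.InjOn w (Set.Iio N))
    (hu : Injective u) (hwu : ∀ s, u s ∉ (range N).image w) (hp : p ≤ N) :
    Set.InjOn (insertBlock w u p) (Set.Iio (N + d)) := by
  have hdisj : Disjoint ((range N).image w) (univ.image u) := by
    simpa [disjoint_right] using hwu
  rw [← coe_range, ← card_image_iff, image_range_insertBlock w u hp,
    card_union_of_disjoint hdisj, card_image_of_injective _ hu,
    card_image_of_injOn (by rwa [coe_range]), card_range, card_univ, Fintype.card_fin, card_range]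

end InsertBlock

lemma exists_injective_forall_notMem {n d : ℕ} (S : Finset (Fin n)) (h : #S + d ≤ n) :
    ∃ u : Fin d → Fin n, Injective u ∧ ∀ s, u s ∉ S := by
  have hd : d ≤ #Sᶜ := by rw [card_compl, Fintype.card_fin]; omega
  exact ⟨fun s => Sᶜ.orderEmbOfFin rfl (Fin.castLE hd s),
    (Sᶜ.orderEmbOfFin rfl).injective.comp (Fin.castLE_injective hd),
    fun s => mem_compl.1 (Sᶜ.orderEmbOfFin_mem rfl _)⟩

section PathEdge

variable {k ℓ n : ℕ} (w : ℕ → Fin n) (u : Fin (k - ℓ) → Fin n) {p j : ℕ}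

variable (k ℓ) in
def pathJoint (j : ℕ) : Finset (Fin n) :=
  (range ℓ).image fun t => w (j * (k - ℓ) + t)

lemma pathEdge_congr {w' : ℕ → Fin n} {j' : ℕ}
    (h : ∀ t < k, w' (j' * (k - ℓ) + t) = w (j * (k - ℓ) + t)) :
    pathEdge k ℓ w' j' = pathEdge k ℓ w j :=
  image_congr fun t ht => h t (mem_range.1 ht)

lemma pathEdge_insertBlock_of_add_le (h : j * (k - ℓ) + k ≤ p) :
    pathEdge k ℓ (insertBlock w u p) j = pathEdge k ℓ w j :=
  pathEdge_congr w fun _ _ => insertBlock_of_lt w u (by omega)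

lemma pathEdge_insertBlock_succ (h : p ≤ j * (k - ℓ)) :
    pathEdge k ℓ (insertBlock w u p) (j + 1) = pathEdge k ℓ w j :=
  pathEdge_congr w fun t _ => by
    rw [add_one_mul, add_right_comm, insertBlock_add w u (by omega)]

lemma pathEdge_insertBlock_self (hℓk : ℓ ≤ k) (h₁ : j * (k - ℓ) ≤ p)
    (h₂ : p ≤ j * (k - ℓ) + ℓ) :
    pathEdge k ℓ (insertBlock w u p) j =
      pathJoint k ℓ w j ∪ univ.image u := by
  have hk : ℓ + (k - ℓ) = k := by omega
  unfold pathEdge pathJoint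
  simp_rw [insertBlock_add_left w u h₁]
  rw [← image_range_insertBlock _ u (by omega : p - j * (k - ℓ) ≤ ℓ), hk]

end PathEdge

section Step

variable {k ℓ n m m₀ : ℕ} {c : Finset (Fin n) → Bool} {w : ℕ → Fin n} {col : Bool}
  (u : Fin (k - ℓ) → Fin n)

lemma IsBlueRed.exists_insertBlock_after_turn (hk : 2 * ℓ ≤ k)
    (h : IsBlueRed (fun j => c (pathEdge k ℓ w j)) m m₀ col)
    (hT : c (pathJoint k ℓ w m₀ ∪ univ.image u) = col) :
    ∃ m₀', IsBlueRed (fun j => c (pathEdge k ℓ (insertBlock w u (m₀ * (k - ℓ) + ℓ)) j))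
      (m + 1) m₀' col := by
  obtain ⟨-, hlo, hhi⟩ := h
  refine exists_isBlueRed_of_forall_lt_of_forall_gt (a := m₀ + 1) (fun j hj => ?_)
    fun j hj hjm => ?_
  · rcases Nat.lt_succ_iff_lt_or_eq.1 hj with hj | rfl
    · have := Nat.mul_le_mul_right (k - ℓ) (Nat.succ_le_of_lt hj)
      rw [Nat.succ_mul] at this
      rw [pathEdge_insertBlock_of_add_le w u (by omega)]
      exact hlo j hj
    · rwa [pathEdge_insertBlock_self w u (by omega) (by omega) le_rfl]
  · obtain ⟨j, rfl⟩ : ∃ i, j = i + 1 := ⟨j - 1, by omega⟩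
    have := Nat.mul_le_mul_right (k - ℓ) (by omega : m₀ + 1 ≤ j)
    rw [Nat.succ_mul] at this
    rw [pathEdge_insertBlock_succ w u (by omega)]
    exact hhi j (by omega) (by omega)

lemma IsBlueRed.exists_insertBlock_before_turn (hk : 2 * ℓ ≤ k)
    (h : IsBlueRed (fun j => c (pathEdge k ℓ w j)) m m₀ col)
    (hT : c (pathJoint k ℓ w m₀ ∪ univ.image u) = !col) :
    ∃ m₀', IsBlueRed (fun j => c (pathEdge k ℓ (insertBlock w u (m₀ * (k - ℓ))) j))
      (m + 1) m₀' col := by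
  obtain ⟨-, hlo, hhi⟩ := h
  refine exists_isBlueRed_of_forall_lt_of_forall_gt (a := m₀ - 1) (fun j hj => ?_)
    fun j hj hjm => ?_
  · have := Nat.mul_le_mul_right (k - ℓ) (by omega : j + 2 ≤ m₀)
    rw [add_mul, two_mul] at this
    rw [pathEdge_insertBlock_of_add_le w u (by omega)]
    exact hlo j (by omega)
  · rcases (by omega : j = m₀ ∨ m₀ < j) with rfl | hj
    · rwa [pathEdge_insertBlock_self w u (by omega) le_rfl (by omega)]
    · obtain ⟨j, rfl⟩ : ∃ i, j = i + 1 := ⟨j - 1, by omega⟩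
      rw [pathEdge_insertBlock_succ w u (Nat.mul_le_mul_right _ (by omega))]
      exact hhi j (by omega) (by omega)

end Step

theorem exists_injOn_isBlueRed {k ℓ n : ℕ} (hk : 2 * ℓ ≤ k) (hn : 0 < n)
    (c : Finset (Fin n) → Bool) :
    ∀ m, m * (k - ℓ) + ℓ ≤ n → ∃ (m₀ : ℕ) (col : Bool) (w : ℕ → Fin n),
      Set.InjOn w (Set.Iio (m * (k - ℓ) + ℓ)) ∧ IsBlueRed (fun j => c (pathEdge k ℓ w j)) m m₀ col
  | 0, hm => by
    refine ⟨0, true, fun i => ⟨i % n, Nat.mod_lt i hn⟩, fun a ha b hb hab => ?_,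
      le_rfl, fun j hj => absurd hj j.not_lt_zero, fun j _ hj => absurd hj j.not_lt_zero⟩
    simp only [Set.mem_Iio, zero_mul, zero_add] at ha hb hm
    simpa [Nat.mod_eq_of_lt (ha.trans_le hm), Nat.mod_eq_of_lt (hb.trans_le hm)] using hab
  | m + 1, hm => by
    have hstep : (m + 1) * (k - ℓ) + ℓ = m * (k - ℓ) + ℓ + (k - ℓ) := by ring
    obtain ⟨m₀, col, w, hw, h⟩ := exists_injOn_isBlueRed hk hn c m (by omega)
    obtain ⟨u, hu, hwu⟩ :=
      exists_injective_forall_notMem (d := k - ℓ) ((range (m * (k - ℓ) + ℓ)).image w)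
      (by rw [card_image_of_injOn (by rwa [coe_range]), card_range]; omega)
    have hinj : ∀ p ≤ m * (k - ℓ) + ℓ,
        Set.InjOn (insertBlock w u p) (Set.Iio ((m + 1) * (k - ℓ) + ℓ)) := fun p hp => by
      rw [hstep]
      exact injOn_insertBlock w u hw hu hwu hp
    have hm₀ := Nat.mul_le_mul_right (k - ℓ) h.1
    by_cases hT : c (pathJoint k ℓ w m₀ ∪ univ.image u) = col
    · obtain ⟨m₀', h'⟩ := h.exists_insertBlock_after_turn u hk hT
      exact ⟨m₀', col, _, hinj _ (by omega), h'⟩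
    · obtain ⟨m₀', h'⟩ := h.exists_insertBlock_before_turn u hk (Bool.eq_not_iff.2 hT)
      exact ⟨m₀', col, _, hinj _ (by omega), h'⟩

theorem exists_blue_red_path_general
    (ℓ k n : ℕ) (hn : 0 < n) (hk : 2 * ℓ ≤ k)
    (hdvd : (k - ℓ) ∣ n) (c : Finset (Fin n) → Bool) :
    ∃ (m m₀ : ℕ) (col : Bool) (w : ℕ → Fin n),
      m₀ ≤ m ∧
      Set.InjOn w (Set.Iio (m * (k - ℓ) + ℓ)) ∧
      (∀ j < m₀, c (pathEdge k ℓ w j) = col) ∧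
      (∀ j, m₀ ≤ j → j < m → c (pathEdge k ℓ w j) = !col) ∧
      ((Finset.range (m * (k - ℓ) + ℓ)).image w).card = n + 2 * ℓ - k := by
  obtain ⟨q, hq⟩ := hdvd
  obtain ⟨m, rfl⟩ : ∃ m, q = m + 1 := Nat.exists_eq_add_one.2 (Nat.pos_of_mul_pos_left (hq ▸ hn))
  have hn' : n = m * (k - ℓ) + (k - ℓ) := by rw [hq]; ring
  obtain ⟨m₀, col, w, hw, hm₀, hlo, hhi⟩ := exists_injOn_isBlueRed hk hn c m (by omega)
  refine ⟨m, m₀, col, w, hm₀, hw, hlo, hhi, ?_⟩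
  rw [card_image_of_injOn (by rwa [coe_range]), card_range]
  omega

/-- **Lemma (blue-red path).** For positive integers `ℓ, k, n` with `ℓ ≤ k/2`
and `k - ℓ` dividing `n`, every 2-edge-colouring `c` of the complete
`k`-uniform hypergraph on `n` vertices contains a blue-red `ℓ`-path `P` with
`|V(P)| = n - k + 2ℓ` (written as `n + 2ℓ - k` to avoid truncated natural
subtraction), i.e. covering all but exactly `k - 2ℓ` vertices.  The path has
`m` edges (given by the linear vertex ordering `w`) and a turning point `m₀`:
the first `m₀` edges have colour `col` and the remaining `m - m₀` edges have
the other colour `!col`. -/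
theorem exists_blue_red_path
    (ℓ k n : ℕ) (hℓ : 0 < ℓ) (hn : 0 < n) (hk : 2 * ℓ ≤ k)
    (hdvd : (k - ℓ) ∣ n) (c : Finset (Fin n) → Bool) :
    ∃ (m m₀ : ℕ) (col : Bool) (w : ℕ → Fin n),
      m₀ ≤ m ∧
      Set.InjOn w (Set.Iio (m * (k - ℓ) + ℓ)) ∧
      (∀ j < m₀, c (pathEdge k ℓ w j) = col) ∧
      (∀ j, m₀ ≤ j → j < m → c (pathEdge k ℓ w j) = !col) ∧
      ((Finset.range (m * (k - ℓ) + ℓ)).image w).card = n + 2 * ℓ - k :=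
  exists_blue_red_path_general ℓ k n hn hk hdvd c
end

section
/- Let ℓ, k be positive integers with 0 < ℓ < k/2. Then every 2-edge-colouring of the complete k-uniform hypergraph K_{2(k−ℓ)}^{(k)} on 2(k−ℓ) vertices contains a monochromatic ℓ-cycle of length two, that is, two k-element edges of the same colour whose intersection has exactly 2ℓ vertices (so that their union is the whole vertex set). In other words, the 2-colour Ramsey number of the k-uniform ℓ-cycle of length two is at most 2(k−ℓ). -/
open Finset

namespace Finset

variable {α : Type*} [Fintype α] [DecidableEq α] {d : ℕ} {g : Finset α → Bool}

theorem apply_eq_of_card_union_add_le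
    (hg : ∀ X Y : Finset α, #X = d → #Y = d → Disjoint X Y → g X ≠ g Y)
    {X X' : Finset α} (hX : #X = d) (hX' : #X' = d) (h : #(X ∪ X') + d ≤ Fintype.card α) :
    g X = g X' := by
  obtain ⟨Z, hZ, hZcard⟩ :=
    exists_subset_card_eq (s := (X ∪ X')ᶜ) (n := d) (by rw [card_compl]; omega)
  have hXZ : Disjoint X Z := (disjoint_compl_right.mono_right hZ).mono_left subset_union_left
  have hX'Z : Disjoint X' Z := (disjoint_compl_right.mono_right hZ).mono_left subset_union_right
  exact (Bool.eq_not_of_ne (hg X Z hX hZcard hXZ)).trans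
    (Bool.eq_not_of_ne (hg X' Z hX' hZcard hX'Z)).symm

theorem apply_eq_of_two_mul_lt_card
    (hg : ∀ X Y : Finset α, #X = d → #Y = d → Disjoint X Y → g X ≠ g Y)
    (hd : 2 * d < Fintype.card α) {X Y : Finset α} (hX : #X = d) (hY : #Y = d) :
    g X = g Y := by
  induction hn : #(X \ Y) generalizing X with
  | zero =>
    rw [eq_of_subset_of_card_le (sdiff_eq_empty_iff_subset.mp (card_eq_zero.mp hn)) (by omega)]
  | succ n ih =>
    obtain ⟨a, ha⟩ := card_pos.mp (by omega : 0 < #(X \ Y))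
    obtain ⟨b, hb⟩ := card_pos.mp (by rw [← card_sdiff_comm (hX.trans hY.symm)]; omega)
    rw [mem_sdiff] at ha hb
    have hX' : #(insert b (X.erase a)) = d := by
      rw [card_insert_of_notMem fun h => hb.2 (mem_of_mem_erase h), card_erase_of_mem ha.1, ← hX]
      exact Nat.sub_add_cancel (card_pos.mpr ⟨a, ha.1⟩)
    have hunion : X ∪ insert b (X.erase a) = insert b X := by
      ext x; simp only [mem_union, mem_insert, mem_erase]; tauto
    have hsdiff : insert b (X.erase a) \ Y = (X \ Y).erase a := by
      ext x; simp only [mem_sdiff, mem_insert, mem_erase]; grind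
    calc g X = g (insert b (X.erase a)) := apply_eq_of_card_union_add_le hg hX hX' (by
            rw [hunion, card_insert_of_notMem hb.2]; omega)
      _ = g Y := ih hX' (by rw [hsdiff, card_erase_of_mem (mem_sdiff.mpr ha)]; omega)

theorem exists_disjoint_apply_eq_of_two_mul_lt_card (g : Finset α → Bool)
    (hd : 2 * d < Fintype.card α) :
    ∃ X Y : Finset α, #X = d ∧ #Y = d ∧ Disjoint X Y ∧ g X = g Y := by
  by_contra! hg
  obtain ⟨X, -, hX⟩ :=
    exists_subset_card_eq (s := (univ : Finset α)) (n := d) (by rw [card_univ]; omega)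
  obtain ⟨Y, hYX, hY⟩ := exists_subset_card_eq (s := Xᶜ) (n := d) (by rw [card_compl]; omega)
  have hXY : Disjoint X Y := disjoint_compl_right.mono_right hYX
  exact hg X Y hX hY hXY (apply_eq_of_two_mul_lt_card hg hd hX hY)

end Finset

/-- **Ramsey number of the `ℓ`-cycle of length two.** For positive integers
`ℓ, k` with `0 < ℓ < k/2`, every 2-edge-colouring `c` of the complete
`k`-uniform hypergraph on `2(k-ℓ)` vertices contains a monochromatic
`ℓ`-cycle of length two: two `k`-element edges of the same colour whose
intersection has exactly `2ℓ` vertices (so their union is the whole vertex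
set). -/
theorem ramsey_two_edge_cycle
    (ℓ k : ℕ) (hℓ : 0 < ℓ) (hk : 2 * ℓ < k)
    (c : Finset (Fin (2 * (k - ℓ))) → Bool) :
    ∃ e₁ e₂ : Finset (Fin (2 * (k - ℓ))),
      e₁.card = k ∧ e₂.card = k ∧ (e₁ ∩ e₂).card = 2 * ℓ ∧
      e₁ ∪ e₂ = Finset.univ ∧ c e₁ = c e₂ := by
  obtain ⟨X, Y, hX, hY, hXY, hc⟩ :=
    exists_disjoint_apply_eq_of_two_mul_lt_card (d := k - 2 * ℓ) (fun X => c Xᶜ)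
      (by rw [Fintype.card_fin]; omega)
  refine ⟨Xᶜ, Yᶜ, ?_, ?_, ?_, ?_, hc⟩
  · rw [card_compl, Fintype.card_fin, hX]; omega
  · rw [card_compl, Fintype.card_fin, hY]; omega
  · rw [← compl_union, card_compl, Fintype.card_fin, card_union_of_disjoint hXY, hX, hY]; omega
  · rw [← compl_inter, disjoint_iff_inter_eq_empty.mp hXY, compl_empty]
end
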